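/- arXiv:1803.02420 — 2 statements merged into one kernel-verified Lean document; each statement's English description precedes it below -/
import Mathlib

section
/- Let G be a finite group with |G| ≥ 3 and E_G nonempty. If there exists x ∈ G with E_G ⊆ ⟨x⟩, then |G| ≤ |x|·φ(|x|). -/
/-- Radical of a natural number: product of its distinct prime divisors. -/
def rad (n : ℕ) : ℕ := n.primeFactors.prod id

/-- The coprime graph of a group: vertices are group elements, distinct
elements adjacent iff their orders are coprime. -/
def coprimeGraph (G : Type*) [Group G] : SimpleGraph G where
  Adj x y := x ≠ y ∧ Nat.Coprime (orderOf x) (orderOf y)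
  symm := by refine ⟨?_⟩; intro x y h; exact ⟨h.1.symm, h.2.symm⟩
  loopless := by refine ⟨?_⟩; intro x h; exact h.1 rfl

noncomputable instance (G : Type*) [Group G] [DecidableEq G] :
    DecidableRel (coprimeGraph G).Adj :=
  fun x y => inferInstanceAs (Decidable (x ≠ y ∧ Nat.Coprime (orderOf x) (orderOf y)))

/-- The set of non-identity end vertices of the coprime graph of `G`. -/
noncomputable def endVerts (G : Type*) [Group G] [Fintype G] [DecidableEq G] : Finset G :=
  Finset.univ.filter (fun x => x ≠ 1 ∧ rad (orderOf x) = rad (Fintype.card G))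

lemma rad_primeFactors (n : ℕ) : (rad n).primeFactors = n.primeFactors := by
  unfold rad
  rw [show n.primeFactors.prod id = ∏ p ∈ n.primeFactors, p from rfl]
  exact Nat.primeFactors_prod (fun p hp => Nat.prime_of_mem_primeFactors hp)

lemma primeFactors_eq_of_rad_eq {a b : ℕ} (h : rad a = rad b) :
    a.primeFactors = b.primeFactors := by
  have := congrArg Nat.primeFactors h
  rwa [rad_primeFactors, rad_primeFactors] at this

lemma zpowers_isCyclic {G : Type*} [Group G] (x : G) : IsCyclic (Subgroup.zpowers x) := by
  refine ⟨⟨⟨x, Subgroup.mem_zpowers x⟩, fun y => ?_⟩⟩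
  obtain ⟨k, hk⟩ := y.2
  exact ⟨k, Subtype.ext (by simpa using hk)⟩

theorem stmt7 (G : Type*) [Group G] [Fintype G] [DecidableEq G]
    (hG : 3 ≤ Fintype.card G) (hne : (endVerts G).Nonempty)
    (x : G) (hx : (endVerts G : Set G) ⊆ (Subgroup.zpowers x : Set G)) :
    Fintype.card G ≤ orderOf x * Nat.totient (orderOf x) := by
  classical
  obtain ⟨y, hy⟩ := hne
  rw [endVerts, Finset.mem_filter] at hy
  obtain ⟨-, hy1, hyrad⟩ := hy
  have hymem : y ∈ endVerts G := by
    rw [endVerts, Finset.mem_filter]; exact ⟨Finset.mem_univ _, hy1, hyrad⟩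
  have hcard : Fintype.card G ≠ 0 := Fintype.card_ne_zero
  have hyx : y ∈ Subgroup.zpowers x := hx hymem
  have hx1 : x ≠ 1 := by
    rintro rfl
    rw [Subgroup.zpowers_one_eq_bot, Subgroup.mem_bot] at hyx
    exact hy1 hyx
  set n := orderOf x with hn
  have hn0 : n ≠ 0 := (orderOf_pos x).ne'
  have hn1 : n ≠ 1 := fun h => hx1 (orderOf_eq_one_iff.mp h)
  have hyn0 : orderOf y ≠ 0 := (orderOf_pos y).ne'
  -- prime factors of n equal those of card G
  have hPFy : (orderOf y).primeFactors = (Fintype.card G).primeFactors :=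
    primeFactors_eq_of_rad_eq hyrad
  have hPF : n.primeFactors = (Fintype.card G).primeFactors := by
    apply Finset.Subset.antisymm
    · exact Nat.primeFactors_mono (orderOf_dvd_card) hcard
    · rw [← hPFy]
      exact Nat.primeFactors_mono (orderOf_dvd_of_mem_zpowers hyx) hn0
  have hradn : rad n = rad (Fintype.card G) := by unfold rad; rw [hPF]
  -- centralizer of x is zpowers x
  have hcent : ∀ c : G, c * x = x * c → c ∈ Subgroup.zpowers x := by
    intro c hc
    by_contra hcc
    set m := orderOf c with hm
    have hm0 : m ≠ 0 := (orderOf_pos c).ne'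
    have hm1 : m ≠ 1 := by
      intro h
      exact hcc ((orderOf_eq_one_iff.mp h) ▸ (Subgroup.zpowers x).one_mem)
    set z := x ^ (m ^ n) with hz
    have hzmem : z ∈ Subgroup.zpowers x := pow_mem (Subgroup.mem_zpowers x) _
    set t := orderOf z with htdef
    have ht0 : t ≠ 0 := (orderOf_pos z).ne'
    have ht : t = n / Nat.gcd n (m ^ n) := orderOf_pow x
    have hgdvd : Nat.gcd n (m ^ n) ∣ n := Nat.gcd_dvd_left _ _
    have htd : t ∣ n := orderOf_dvd_of_mem_zpowers hzmem
    have hmn0 : m ^ n ≠ 0 := pow_ne_zero _ hm0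
    -- factorization of t
    have htfact : ∀ p : ℕ, t.factorization p
        = n.factorization p - min (n.factorization p) (n * m.factorization p) := by
      intro p
      rw [ht, Nat.factorization_div hgdvd, Nat.factorization_gcd hn0 hmn0,
        Nat.factorization_pow]
      simp
    have hco : Nat.Coprime m t := by
      by_contra hco
      obtain ⟨p, hp, hpdvd⟩ := Nat.exists_prime_and_dvd hco
      have hpm : p ∣ m := hpdvd.trans (Nat.gcd_dvd_left _ _)
      have hpt : p ∣ t := hpdvd.trans (Nat.gcd_dvd_right _ _)
      have h1 : 1 ≤ m.factorization p := (hp.factorization_pos_of_dvd hm0 hpm)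
      have h2 : n.factorization p ≤ n * m.factorization p :=
        le_trans (Nat.factorization_lt p hn0).le (Nat.le_mul_of_pos_right n h1)
      have h3 : t.factorization p = 0 := by
        rw [htfact p, min_eq_left h2, Nat.sub_self]
      exact hp.factorization_pos_of_dvd ht0 hpt |>.ne' h3
    have hcx : Commute c x := hc
    have hcz : Commute c z := hcx.pow_right _
    have hord : orderOf (c * z) = m * t :=
      hcz.orderOf_mul_eq_mul_orderOf_of_coprime hco
    have hmt0 : m * t ≠ 0 := mul_ne_zero hm0 ht0
    have hPFmt : (m * t).primeFactors = (Fintype.card G).primeFactors := by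
      apply Finset.Subset.antisymm
      · rw [Nat.primeFactors_mul hm0 ht0]
        apply Finset.union_subset
        · exact Nat.primeFactors_mono orderOf_dvd_card hcard
        · rw [← hPF]; exact Nat.primeFactors_mono htd hn0
      · intro p hpmem
        have hpmem' : p ∈ n.primeFactors := hPF ▸ hpmem
        have hp : p.Prime := Nat.prime_of_mem_primeFactors hpmem'
        rw [Nat.mem_primeFactors]
        refine ⟨hp, ?_, hmt0⟩
        by_cases hpm : p ∣ m
        · exact hpm.mul_right t
        · have hzero : m.factorization p = 0 := Nat.factorization_eq_zero_of_not_dvd hpm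
          have : t.factorization p = n.factorization p := by
            rw [htfact p, hzero, mul_zero, Nat.min_zero, Nat.sub_zero]
          have hpos : t.factorization p ≠ 0 := by
            rw [this]
            exact (hp.factorization_pos_of_dvd hn0
              (Nat.dvd_of_mem_primeFactors hpmem')).ne'
          exact (Nat.dvd_of_factorization_pos hpos).mul_left m
    have hcz1 : c * z ≠ 1 := by
      intro h
      have : m * t = 1 := by rw [← hord, h, orderOf_one]
      exact hm1 (Nat.eq_one_of_mul_eq_one_right this)
    have : c * z ∈ endVerts G := by
      rw [endVerts, Finset.mem_filter]
      refine ⟨Finset.mem_univ _, hcz1, ?_⟩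
      rw [hord]; unfold rad; rw [hPFmt]
    have hczmem : c * z ∈ Subgroup.zpowers x := hx this
    exact hcc (by simpa using Subgroup.mul_mem _ hczmem (Subgroup.inv_mem _ hzmem))
  -- orbit-stabilizer for the conjugation action on x
  haveI : Fintype (MulAction.orbit (ConjAct G) x) := Set.Finite.fintype (Set.toFinite _)
  have horb := MulAction.card_orbit_mul_card_stabilizer_eq_card_group (ConjAct G) x
  have hcardConj : Fintype.card (ConjAct G) = Fintype.card G := rfl
  -- stabilizer ≃ zpowers x
  have hstab : ∀ g : ConjAct G,
      g ∈ MulAction.stabilizer (ConjAct G) x ↔ ConjAct.ofConjAct g ∈ Subgroup.zpowers x := by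
    intro g
    rw [MulAction.mem_stabilizer_iff, ConjAct.smul_def]
    constructor
    · intro h
      apply hcent
      have := congrArg (· * ConjAct.ofConjAct g) h
      simpa [mul_assoc] using this
    · intro h
      obtain ⟨k, hk⟩ := h
      rw [← hk]
      group
  have hstabcard : Fintype.card (MulAction.stabilizer (ConjAct G) x) = n := by
    rw [hn, ← Fintype.card_zpowers (x := x)]
    apply Fintype.card_congr
    refine ⟨fun g => ⟨ConjAct.ofConjAct g.1, (hstab g.1).mp g.2⟩,
      fun h => ⟨ConjAct.toConjAct h.1, (hstab _).mpr (by simpa using h.2)⟩, ?_, ?_⟩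
    · intro g; ext; simp
    · intro h; ext; simp
  -- orbit injects into elements of zpowers x of order n
  have horbsub : ∀ v ∈ MulAction.orbit (ConjAct G) x, v ∈ Subgroup.zpowers x ∧ orderOf v = n := by
    intro v hv
    obtain ⟨g, hg⟩ := hv
    have hconj : v = ConjAct.ofConjAct g * x * (ConjAct.ofConjAct g)⁻¹ := by
      rw [← hg]; show g • x = _; rw [ConjAct.smul_def]
    have hov : orderOf v = n := by
      rw [hconj]
      exact (SemiconjBy.orderOf_eq (ConjAct.ofConjAct g)
        (by simp [SemiconjBy, mul_assoc])).symm
    have hv1 : v ≠ 1 := fun h => hn1 (by rw [← hov, h, orderOf_one])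
    have : v ∈ endVerts G := by
      rw [endVerts, Finset.mem_filter]
      exact ⟨Finset.mem_univ _, hv1, by rw [hov]; exact hradn⟩
    exact ⟨hx this, hov⟩
  haveI : IsCyclic (Subgroup.zpowers x) := zpowers_isCyclic x
  have hcount : Fintype.card {a : Subgroup.zpowers x // orderOf a = n} = Nat.totient n := by
    rw [Fintype.card_subtype]
    have hdvd : n ∣ Fintype.card (Subgroup.zpowers x) := by rw [Fintype.card_zpowers, ← hn]
    simpa using IsCyclic.card_orderOf_eq_totient hdvd
  have horble : Fintype.card (MulAction.orbit (ConjAct G) x) ≤ Nat.totient n := by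
    rw [← hcount]
    apply Fintype.card_le_of_injective
      (fun v => ⟨⟨v.1, (horbsub v.1 v.2).1⟩,
        (orderOf_injective (Subgroup.zpowers x).subtype
          Subtype.coe_injective _).symm.trans (horbsub v.1 v.2).2⟩)
    intro a b hab
    ext
    exact congrArg (fun s => (s.1 : G)) hab
  calc Fintype.card G
      = Fintype.card (MulAction.orbit (ConjAct G) x)
        * Fintype.card (MulAction.stabilizer (ConjAct G) x) := by rw [horb, hcardConj]
    _ ≤ Nat.totient n * n := by
        rw [hstabcard]; exact Nat.mul_le_mul_right n horble
    _ = n * Nat.totient n := mul_comm _ _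
end

section
/- Let G be a finite group with |E_G| = 4. If some element of E_G has order a prime power, then G ≅ Z/5Z. -/
theorem stmt17 (G : Type*) [Group G] [Fintype G] [DecidableEq G]
    (hE : (endVerts G).card = 4) (x : G) (hx : x ∈ endVerts G)
    (p k : ℕ) (hp : p.Prime) (hord : orderOf x = p ^ k) :
    Nonempty (G ≃* Multiplicative (ZMod 5)) := by
  simp only [endVerts, Finset.mem_filter, Finset.mem_univ, true_and] at hx
  obtain ⟨hx1, hrad⟩ := hx
  have hk : k ≠ 0 := by
    rintro rfl
    rw [pow_zero, orderOf_eq_one_iff] at hord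
    exact hx1 hord
  have hradx : rad (orderOf x) = p := by
    rw [hord]
    unfold rad
    rw [Nat.primeFactors_prime_pow hk hp]
    simp
  have hradG : rad (Fintype.card G) = p := by rw [← hrad, hradx]
  have hcard0 : Fintype.card G ≠ 0 := Fintype.card_ne_zero
  have hpdvdG : p ∣ Fintype.card G := by
    rw [← hradG]
    exact Nat.prod_primeFactors_dvd _
  have hPF : (Fintype.card G).primeFactors = {p} := by
    apply Finset.Subset.antisymm
    · intro q hq
      have hq' : q ∣ p := by
        rw [← hradG]
        exact Finset.dvd_prod_of_mem id hq
      have hqp : q.Prime := Nat.prime_of_mem_primeFactors hq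
      rw [Finset.mem_singleton]
      exact (Nat.prime_dvd_prime_iff_eq hqp hp).mp hq'
    · intro q hq
      rw [Finset.mem_singleton] at hq
      subst hq
      exact Nat.mem_primeFactors.mpr ⟨hp, hpdvdG, hcard0⟩
  have key : endVerts G = Finset.univ.filter (fun y => y ≠ 1) := by
    ext y
    simp only [endVerts, Finset.mem_filter, Finset.mem_univ, true_and, and_iff_left_iff_imp]
    intro hy1
    have h1 : 1 < orderOf y := by
      rcases Nat.lt_or_ge (orderOf y) 2 with h | h
      · interval_cases h' : orderOf y
        · exact absurd h' (orderOf_pos y).ne'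
        · exact absurd (orderOf_eq_one_iff.mp h') hy1
      · omega
    have hdvd : orderOf y ∣ Fintype.card G := orderOf_dvd_card
    have hsub : (orderOf y).primeFactors ⊆ {p} := by
      rw [← hPF]
      exact Nat.primeFactors_mono hdvd hcard0
    have hne : (orderOf y).primeFactors.Nonempty := Nat.nonempty_primeFactors.mpr h1
    have hPFy : (orderOf y).primeFactors = {p} :=
      Finset.Nonempty.subset_singleton_iff hne |>.mp hsub
    unfold rad
    rw [hPFy, hPF]
  have hcardE : (endVerts G).card = Fintype.card G - 1 := by
    rw [key, Finset.filter_ne', Finset.card_erase_of_mem (Finset.mem_univ 1),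
      Finset.card_univ]
  have hG5 : Fintype.card G = 5 := by
    rw [hcardE] at hE
    have := Fintype.card_pos (α := G)
    omega
  have h5 : Fact (Nat.Prime 5) := ⟨by norm_num⟩
  have h1 : Nat.card G = 5 := by rw [Nat.card_eq_fintype_card, hG5]
  have h2 : Nat.card (Multiplicative (ZMod 5)) = 5 := by
    simp [Nat.card_eq_fintype_card]
  exact ⟨mulEquivOfPrimeCardEq h1 h2⟩
end
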